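/- arXiv:2308.04843 — 2 statements merged into one kernel-verified Lean document; each statement's English description precedes it below -/
import Mathlib

section
/- There exists a constant M > 0 such that for every continuously differentiable function φ : ℝ² → ℝ with compact support, ‖φ‖_{L⁴} ≤ M · ‖φ‖_{L²}^{1/2} · ‖∇φ‖_{L²}^{1/2}, i.e. (∫_{ℝ²} |φ(x)|⁴ dx)^{1/4} ≤ M · (∫_{ℝ²} |φ(x)|² dx)^{1/4} · (∫_{ℝ²} |∇φ(x)|² dx)^{1/4}. -/
/-!
Apply the two-dimensional Gagliardo–Nirenberg–Sobolev inequality `‖u‖_{L²} ≤ ‖Du‖_{L¹}` to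
`u = φ²`. Since `Du = 2 φ Dφ`, Cauchy–Schwarz turns it into `∫ φ⁴ ≤ 4 ∫ φ² ∫ ‖Dφ‖²`.
On `Fin 2 → ℝ` the norm is the sup norm, so `‖Dφ x‖` is the `ℓ¹` norm of the partial derivatives,
whose square is at most twice their sum of squares.
-/

open MeasureTheory

/-- The `i`-th partial derivative of a function on `ℝ²`. -/
noncomputable def pderiv2 (f : (Fin 2 → ℝ) → ℝ) (i : Fin 2) (x : Fin 2 → ℝ) : ℝ :=
  fderiv ℝ f x (Pi.single i 1)

open scoped ENNReal

namespace ContinuousLinearMap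

variable {ι : Type*} [Fintype ι] [DecidableEq ι]

theorem apply_eq_sum_mul_apply_single (L : (ι → ℝ) →L[ℝ] ℝ) (x : ι → ℝ) :
    L x = ∑ i, x i * L (Pi.single i 1) := by
  conv_lhs => rw [← Finset.univ_sum_single x]
  rw [map_sum]
  congr 1 with i
  rw [← smul_eq_mul, ← map_smul, ← Pi.single_smul', smul_eq_mul, mul_one]

theorem norm_le_sum_abs_apply_single (L : (ι → ℝ) →L[ℝ] ℝ) :
    ‖L‖ ≤ ∑ i, |L (Pi.single i 1)| := by
  refine L.opNorm_le_bound (by positivity) fun x => ?_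
  calc ‖L x‖ = |∑ i, x i * L (Pi.single i 1)| := by
        rw [Real.norm_eq_abs, L.apply_eq_sum_mul_apply_single]
    _ ≤ ∑ i, |x i| * |L (Pi.single i 1)| :=
        (Finset.abs_sum_le_sum_abs _ _).trans_eq (by simp only [abs_mul])
    _ ≤ ∑ i, ‖x‖ * |L (Pi.single i 1)| := by
        gcongr with i; exact norm_le_pi_norm x i
    _ = (∑ i, |L (Pi.single i 1)|) * ‖x‖ := by rw [← Finset.mul_sum, mul_comm]

theorem sq_norm_le_card_mul_sum_sq_apply_single (L : (ι → ℝ) →L[ℝ] ℝ) :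
    ‖L‖ ^ 2 ≤ Fintype.card ι * ∑ i, L (Pi.single i 1) ^ 2 := by
  calc ‖L‖ ^ 2 ≤ (∑ i, |L (Pi.single i 1)|) ^ 2 := by
        gcongr; exact L.norm_le_sum_abs_apply_single
    _ ≤ Fintype.card ι * ∑ i, |L (Pi.single i 1)| ^ 2 := sq_sum_le_card_mul_sum_sq
    _ = Fintype.card ι * ∑ i, L (Pi.single i 1) ^ 2 := by simp only [sq_abs]

end ContinuousLinearMap

theorem ENNReal.sq_lintegral_mul_le {α : Type*} [MeasurableSpace α] (μ : Measure α)
    {f g : α → ℝ≥0∞} (hf : AEMeasurable f μ) (hg : AEMeasurable g μ) :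
    (∫⁻ x, f x * g x ∂μ) ^ 2 ≤ (∫⁻ x, f x ^ 2 ∂μ) * ∫⁻ x, g x ^ 2 ∂μ := by
  calc (∫⁻ x, f x * g x ∂μ) ^ 2
      ≤ ((∫⁻ x, f x ^ (2 : ℝ) ∂μ) ^ (1 / 2 : ℝ) * (∫⁻ x, g x ^ (2 : ℝ) ∂μ) ^ (1 / 2 : ℝ)) ^ 2 := by
        gcongr
        exact ENNReal.lintegral_mul_le_Lp_mul_Lq μ Real.HolderConjugate.two_two hf hg
    _ = (∫⁻ x, f x ^ 2 ∂μ) * ∫⁻ x, g x ^ 2 ∂μ := by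
        simp only [ENNReal.rpow_two, mul_pow, ← ENNReal.rpow_natCast, ← ENNReal.rpow_mul]
        norm_num

theorem ofReal_integral_norm_pow_eq_lintegral_enorm_pow {X F : Type*} [TopologicalSpace X]
    [MeasurableSpace X] [OpensMeasurableSpace X] {μ : Measure X} [IsFiniteMeasureOnCompacts μ]
    [NormedAddCommGroup F] {f : X → F} (hf : Continuous f) (h2f : HasCompactSupport f) {n : ℕ}
    (hn : n ≠ 0) :
    ENNReal.ofReal (∫ x, ‖f x‖ ^ n ∂μ) = ∫⁻ x, ‖f x‖ₑ ^ n ∂μ := by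
  have hint : Integrable (fun x => ‖f x‖ ^ n) μ :=
    (hf.norm.pow n).integrable_of_hasCompactSupport
      (h2f.comp_left (g := fun y => ‖y‖ ^ n) (by simp [hn]))
  simpa only [norm_pow, norm_norm, enorm_pow, enorm_norm] using
    ofReal_integral_norm_eq_lintegral_enorm hint

theorem enorm_fderiv_sq {E : Type*} [NormedAddCommGroup E] [NormedSpace ℝ E] {φ : E → ℝ}
    {x : E} (hφ : DifferentiableAt ℝ φ x) :
    ‖fderiv ℝ (fun y => φ y ^ 2) x‖ₑ = 2 * (‖φ x‖ₑ * ‖fderiv ℝ φ x‖ₑ) := by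
  rw [fderiv_fun_pow 2 hφ, enorm_smul, nsmul_eq_mul, enorm_mul, Real.enorm_natCast, pow_one,
    mul_assoc, Nat.cast_ofNat]

section Ladyzhenskaya

variable {ι : Type*} [Fintype ι] {φ : (ι → ℝ) → ℝ}

theorem integral_sq_norm_fderiv_le [DecidableEq ι] (hφ : ContDiff ℝ 1 φ)
    (h2φ : HasCompactSupport φ) :
    ∫ x, ‖fderiv ℝ φ x‖ ^ 2 ≤
      Fintype.card ι * ∫ x, ∑ i, fderiv ℝ φ x (Pi.single i 1) ^ 2 := by
  have hsupp : HasCompactSupport fun x => ∑ i, fderiv ℝ φ x (Pi.single i 1) ^ 2 :=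
    (h2φ.fderiv ℝ).comp_left (g := fun L : (ι → ℝ) →L[ℝ] ℝ => ∑ i, L (Pi.single i 1) ^ 2)
      (by simp)
  have hint : Integrable fun x => ∑ i, fderiv ℝ φ x (Pi.single i 1) ^ 2 :=
    (continuous_finsetSum _ fun i _ =>
      ((hφ.continuous_fderiv one_ne_zero).clm_apply continuous_const).pow 2)
      |>.integrable_of_hasCompactSupport hsupp
  rw [← integral_const_mul]
  exact integral_mono_of_nonneg (.of_forall fun x => by positivity) (hint.const_mul _)
    (.of_forall fun x => (fderiv ℝ φ x).sq_norm_le_card_mul_sum_sq_apply_single)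

theorem lintegral_enorm_pow_four_le (hι : Fintype.card ι = 2) (hφ : ContDiff ℝ 1 φ)
    (h2φ : HasCompactSupport φ) :
    ∫⁻ x, ‖φ x‖ₑ ^ 4 ≤ 4 * (∫⁻ x, ‖φ x‖ₑ ^ 2) * ∫⁻ x, ‖fderiv ℝ φ x‖ₑ ^ 2 := by
  have hp : Real.HolderConjugate (Fintype.card ι) 2 := by
    rw [hι]; exact_mod_cast Real.HolderConjugate.two_two
  have sobolev := lintegral_pow_le_pow_lintegral_fderiv_aux hp (hφ.pow 2)
    (h2φ.comp_left (g := fun t : ℝ => t ^ 2) (zero_pow two_ne_zero))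
  simp only [ENNReal.rpow_two, enorm_pow, ← pow_mul] at sobolev
  have hd := hφ.differentiable one_ne_zero
  calc ∫⁻ x, ‖φ x‖ₑ ^ 4 ≤ (∫⁻ x, ‖fderiv ℝ (fun y => φ y ^ 2) x‖ₑ) ^ 2 := sobolev
    _ = 4 * (∫⁻ x, ‖φ x‖ₑ * ‖fderiv ℝ φ x‖ₑ) ^ 2 := by
        simp only [enorm_fderiv_sq (hd _)]
        rw [lintegral_const_mul' _ _ ENNReal.ofNat_ne_top, mul_pow]
        norm_num
    _ ≤ 4 * ((∫⁻ x, ‖φ x‖ₑ ^ 2) * ∫⁻ x, ‖fderiv ℝ φ x‖ₑ ^ 2) := by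
        gcongr
        exact ENNReal.sq_lintegral_mul_le _ hφ.continuous.enorm.aemeasurable
          (hφ.continuous_fderiv one_ne_zero).enorm.aemeasurable
    _ = _ := (mul_assoc _ _ _).symm

theorem integral_norm_pow_four_le (hι : Fintype.card ι = 2) (hφ : ContDiff ℝ 1 φ)
    (h2φ : HasCompactSupport φ) :
    ∫ x, ‖φ x‖ ^ 4 ≤ 4 * (∫ x, ‖φ x‖ ^ 2) * ∫ x, ‖fderiv ℝ φ x‖ ^ 2 := by
  have hDφ := hφ.continuous_fderiv one_ne_zero
  rw [← ENNReal.ofReal_le_ofReal_iff (by positivity), ENNReal.ofReal_mul (by positivity),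
    ENNReal.ofReal_mul (by norm_num)]
  simp only [ofReal_integral_norm_pow_eq_lintegral_enorm_pow hφ.continuous h2φ four_ne_zero,
    ofReal_integral_norm_pow_eq_lintegral_enorm_pow hφ.continuous h2φ two_ne_zero,
    ofReal_integral_norm_pow_eq_lintegral_enorm_pow hDφ (h2φ.fderiv ℝ) two_ne_zero]
  simpa only [ENNReal.ofReal_ofNat] using lintegral_enorm_pow_four_le hι hφ h2φ

end Ladyzhenskaya

/-- Two-dimensional Gagliardo–Nirenberg (Ladyzhenskaya) inequality:
`‖φ‖_{L⁴} ≤ M ‖φ‖_{L²}^{1/2} ‖∇φ‖_{L²}^{1/2}` for compactly supported `C¹` functions on `ℝ²`. -/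
theorem gagliardo_nirenberg_dim2 :
    ∃ M : ℝ, 0 < M ∧ ∀ φ : (Fin 2 → ℝ) → ℝ, ContDiff ℝ 1 φ → HasCompactSupport φ →
      (∫ x, |φ x| ^ 4) ^ ((1 : ℝ) / 4) ≤
        M * (∫ x, |φ x| ^ 2) ^ ((1 : ℝ) / 4) *
          (∫ x, ∑ i, (pderiv2 φ i x) ^ 2) ^ ((1 : ℝ) / 4) := by
  refine ⟨8 ^ ((1 : ℝ) / 4), by positivity, fun φ hφ h2φ => ?_⟩
  have hgrad : ∫ x, ‖fderiv ℝ φ x‖ ^ 2 ≤ 2 * ∫ x, ∑ i, (pderiv2 φ i x) ^ 2 := by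
    simpa only [pderiv2, Fintype.card_fin, Nat.cast_ofNat] using integral_sq_norm_fderiv_le hφ h2φ
  have hpow_four : ∫ x, |φ x| ^ 4 ≤ 8 * ((∫ x, |φ x| ^ 2) * ∫ x, ∑ i, (pderiv2 φ i x) ^ 2) := by
    calc ∫ x, |φ x| ^ 4 ≤ 4 * (∫ x, |φ x| ^ 2) * ∫ x, ‖fderiv ℝ φ x‖ ^ 2 := by
          simpa only [Real.norm_eq_abs] using integral_norm_pow_four_le (by simp) hφ h2φ
      _ ≤ 4 * (∫ x, |φ x| ^ 2) * (2 * ∫ x, ∑ i, (pderiv2 φ i x) ^ 2) := by gcongr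
      _ = _ := by ring
  calc (∫ x, |φ x| ^ 4) ^ ((1 : ℝ) / 4)
      ≤ (8 * ((∫ x, |φ x| ^ 2) * ∫ x, ∑ i, (pderiv2 φ i x) ^ 2)) ^ ((1 : ℝ) / 4) := by gcongr
    _ = _ := by
        rw [Real.mul_rpow (by norm_num) (by positivity),
          Real.mul_rpow (by positivity) (by positivity), mul_assoc]
end

section
/- For every ε > 0 there exists a constant M > 0 (depending only on ε) such that for all continuously differentiable, compactly supported u, u₂ : ℝ² → ℝ² and every continuous, compactly supported C : ℝ² → ℝ, |∫_{ℝ²} C(x) (u₂(x) · u(x)) dx| ≤ M ‖C‖_{L²}² + ε ‖∇u‖_{L²}² + M ‖u₂‖_{L²}² ‖∇u₂‖_{L²}² ‖u‖_{L²}². -/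
/-!
In two dimensions the Gagliardo–Nirenberg–Sobolev inequality `‖g‖₂ ≤ C ‖∇g‖₁`, applied to
`g = |v|²` with `|∇|v|²| ≤ 2 |v| |∇v|` and Cauchy–Schwarz, gives Ladyzhenskaya's inequality
`‖v‖₄⁴ ≤ 4C ‖v‖₂² ‖∇v‖₂²`. Then
`|∫ C (u₂ · u)| ≤ ½ ‖C‖₂² + ½ ∫ |u₂|² |u|² ≤ ½ ‖C‖₂² + ½ ‖u₂‖₄² ‖u‖₄²`,
and by Ladyzhenskaya the last product is at most `4C (‖u₂‖₂² ‖∇u₂‖₂² ‖u‖₂²)^{1/2} ‖∇u‖₂`,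
which Young's inequality splits into `ε ‖∇u‖₂² + M ‖u₂‖₂² ‖∇u₂‖₂² ‖u‖₂²`.
Vector fields are read as maps into `EuclideanSpace ℝ (Fin 2)`, where `∑ i, (u x i) ^ 2` is a
squared norm; their derivative has operator norm controlled by the partial derivatives.
-/

open MeasureTheory

open Module
open scoped ENNReal NNReal RealInnerProductSpace

theorem ENNReal.lintegral_mul_sq_le {α : Type*} [MeasurableSpace α] {μ : Measure α}
    {f g : α → ℝ≥0∞} (hf : AEMeasurable f μ) (hg : AEMeasurable g μ) :
    (∫⁻ a, f a * g a ∂μ) ^ 2 ≤ (∫⁻ a, f a ^ 2 ∂μ) * ∫⁻ a, g a ^ 2 ∂μ := by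
  have := ENNReal.lintegral_mul_le_Lp_mul_Lq μ .two_two hf hg
  simp only [ENNReal.rpow_two, Pi.mul_apply] at this
  calc (∫⁻ a, f a * g a ∂μ) ^ 2
      ≤ ((∫⁻ a, f a ^ 2 ∂μ) ^ (1 / 2 : ℝ) * (∫⁻ a, g a ^ 2 ∂μ) ^ (1 / 2 : ℝ)) ^ 2 := by
        gcongr
    _ = (∫⁻ a, f a ^ 2 ∂μ) * ∫⁻ a, g a ^ 2 ∂μ := by
        rw [mul_pow, ← ENNReal.rpow_natCast, ← ENNReal.rpow_natCast, ← ENNReal.rpow_mul,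
          ← ENNReal.rpow_mul]
        norm_num

section

variable {α : Type*} [MeasurableSpace α] {ν : Measure α}
  {F : Type*} [NormedAddCommGroup F] [InnerProductSpace ℝ F]

theorem sq_integral_mul_le_integral_sq_mul_integral_sq {f g : α → ℝ} (hf0 : 0 ≤ᵐ[ν] f)
    (hg0 : 0 ≤ᵐ[ν] g) (hf : MemLp f 2 ν) (hg : MemLp g 2 ν) :
    (∫ x, f x * g x ∂ν) ^ 2 ≤ (∫ x, f x ^ 2 ∂ν) * ∫ x, g x ^ 2 ∂ν := by
  have holder := integral_mul_le_Lp_mul_Lq_of_nonneg .two_two hf0 hg0 (by simpa using hf)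
    (by simpa using hg)
  simp only [Real.rpow_two, ← Real.sqrt_eq_rpow] at holder
  have hfg : 0 ≤ ∫ x, f x * g x ∂ν :=
    integral_nonneg_of_ae (by filter_upwards [hf0, hg0] with x hfx hgx using mul_nonneg hfx hgx)
  calc (∫ x, f x * g x ∂ν) ^ 2
      ≤ (√(∫ x, f x ^ 2 ∂ν) * √(∫ x, g x ^ 2 ∂ν)) ^ 2 := pow_le_pow_left₀ hfg holder 2
    _ = (∫ x, f x ^ 2 ∂ν) * ∫ x, g x ^ 2 ∂ν := by
        rw [mul_pow, Real.sq_sqrt (integral_nonneg fun x => sq_nonneg _),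
          Real.sq_sqrt (integral_nonneg fun x => sq_nonneg _)]

theorem abs_integral_mul_inner_le {c : α → ℝ} {v w : α → F}
    (hc : Integrable (fun x => c x ^ 2) ν) (hcwv : Integrable (fun x => c x * ⟪w x, v x⟫) ν)
    (hwv : Integrable (fun x => ‖w x‖ ^ 2 * ‖v x‖ ^ 2) ν) :
    |∫ x, c x * ⟪w x, v x⟫ ∂ν| ≤
      (∫ x, c x ^ 2 ∂ν) / 2 + (∫ x, ‖w x‖ ^ 2 * ‖v x‖ ^ 2 ∂ν) / 2 := by
  have pointwise (x : α) : |c x * ⟪w x, v x⟫| ≤ c x ^ 2 / 2 + ‖w x‖ ^ 2 * ‖v x‖ ^ 2 / 2 := by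
    have := abs_real_inner_le_norm (w x) (v x)
    rw [abs_mul]
    nlinarith [two_mul_le_add_sq |c x| (‖w x‖ * ‖v x‖), abs_nonneg (c x), sq_abs (c x)]
  calc |∫ x, c x * ⟪w x, v x⟫ ∂ν|
      ≤ ∫ x, |c x * ⟪w x, v x⟫| ∂ν := abs_integral_le_integral_abs
    _ ≤ ∫ x, (c x ^ 2 / 2 + ‖w x‖ ^ 2 * ‖v x‖ ^ 2 / 2) ∂ν :=
        integral_mono hcwv.abs ((hc.div_const 2).add (hwv.div_const 2)) pointwise
    _ = _ := by rw [integral_add (hc.div_const 2) (hwv.div_const 2), integral_div, integral_div]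

theorem ofReal_integral_norm_pow_eq_lintegral_enorm_pow_s10 {G : Type*} [NormedAddCommGroup G]
    {f : α → G} {n : ℕ} (hf : Integrable (fun x => ‖f x‖ ^ n) ν) :
    ENNReal.ofReal (∫ x, ‖f x‖ ^ n ∂ν) = ∫⁻ x, ‖f x‖ₑ ^ n ∂ν := by
  simpa only [norm_pow, norm_norm, enorm_pow, enorm_norm] using
    ofReal_integral_norm_eq_lintegral_enorm hf

end

theorem le_mul_add_div_of_sq_le_mul {x a b ε : ℝ} (hε : 0 < ε) (ha : 0 ≤ a) (hb : 0 ≤ b)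
    (h : x ^ 2 ≤ a * b) : x ≤ ε * b + a / (4 * ε) := by
  have hsq : a * b ≤ (ε * b + a / (4 * ε)) ^ 2 := by
    have : (ε * b + a / (4 * ε)) ^ 2 = (ε * b - a / (4 * ε)) ^ 2 + a * b := by
      field_simp; ring
    nlinarith [sq_nonneg (ε * b - a / (4 * ε))]
  exact le_of_abs_le (abs_le_of_sq_le_sq (h.trans hsq) (by positivity))

theorem Continuous.integrable_norm_pow_of_hasCompactSupport {X G : Type*} [TopologicalSpace X]
    [MeasurableSpace X] [OpensMeasurableSpace X] {ν : Measure X} [IsFiniteMeasureOnCompacts ν]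
    [NormedAddCommGroup G] {f : X → G} (hf : Continuous f) (h2f : HasCompactSupport f) {n : ℕ}
    (hn : n ≠ 0) : Integrable (fun x => ‖f x‖ ^ n) ν :=
  (hf.memLp_of_hasCompactSupport (p := n) h2f).integrable_norm_pow hn

theorem Continuous.memLp_norm_sq_of_hasCompactSupport {X G : Type*} [TopologicalSpace X]
    [MeasurableSpace X] [OpensMeasurableSpace X] {ν : Measure X} [IsFiniteMeasureOnCompacts ν]
    [NormedAddCommGroup G] {u : X → G} (hu : Continuous u) (h2u : HasCompactSupport u) :
    MemLp (fun x => ‖u x‖ ^ 2) 2 ν := by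
  have hsupp : HasCompactSupport fun x => ‖u x‖ ^ 2 :=
    h2u.comp_left (g := fun y : G => ‖y‖ ^ 2) (by simp)
  exact (hu.norm.pow 2).memLp_of_hasCompactSupport hsupp

theorem norm_fderiv_norm_sq_le {E F : Type*} [NormedAddCommGroup E] [NormedSpace ℝ E]
    [NormedAddCommGroup F] [InnerProductSpace ℝ F] {u : E → F}
    {x : E} (hu : DifferentiableAt ℝ u x) :
    ‖fderiv ℝ (fun y => ‖u y‖ ^ 2) x‖ ≤ 2 * (‖u x‖ * ‖fderiv ℝ u x‖) := by
  rw [hu.hasFDerivAt.norm_sq.fderiv, ← Nat.cast_smul_eq_nsmul ℝ, norm_smul, Nat.cast_ofNat,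
    Real.norm_ofNat]
  gcongr
  exact (ContinuousLinearMap.opNorm_comp_le _ _).trans_eq (by rw [innerSL_apply_norm])

section

variable {F : Type*} [NormedAddCommGroup F] [InnerProductSpace ℝ F]
  {E : Type*} [NormedAddCommGroup E] [NormedSpace ℝ E] [MeasurableSpace E] [BorelSpace E]
  [FiniteDimensional ℝ E] (μ : Measure E) [μ.IsAddHaarMeasure]

theorem lintegral_enorm_pow_four_le_s10 (hE : finrank ℝ E = 2) {u : E → F} (hu : ContDiff ℝ 1 u)
    (h2u : HasCompactSupport u) :
    ∫⁻ x, ‖u x‖ₑ ^ 4 ∂μ ≤ 4 * lintegralPowLePowLIntegralFDerivConst μ 2 *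
      (∫⁻ x, ‖u x‖ₑ ^ 2 ∂μ) * ∫⁻ x, ‖fderiv ℝ u x‖ₑ ^ 2 ∂μ := by
  have hp : Real.HolderConjugate (finrank ℝ E) 2 := by rw [hE]; exact .two_two
  have gns := lintegral_pow_le_pow_lintegral_fderiv μ (hu.norm_sq ℝ)
    (h2u.comp_left (g := fun v => ‖v‖ ^ 2) (by simp)) hp
  have hderiv : ∫⁻ x, ‖fderiv ℝ (fun y => ‖u y‖ ^ 2) x‖ₑ ∂μ ≤
      2 * ∫⁻ x, ‖u x‖ₑ * ‖fderiv ℝ u x‖ₑ ∂μ := by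
    rw [← lintegral_const_mul' _ _ ENNReal.ofNat_ne_top]
    refine lintegral_mono fun x => ?_
    calc ‖fderiv ℝ (fun y => ‖u y‖ ^ 2) x‖ₑ
        = ENNReal.ofReal ‖fderiv ℝ (fun y => ‖u y‖ ^ 2) x‖ := (ofReal_norm _).symm
      _ ≤ ENNReal.ofReal (2 * (‖u x‖ * ‖fderiv ℝ u x‖)) :=
          ENNReal.ofReal_le_ofReal (norm_fderiv_norm_sq_le (hu.differentiable one_ne_zero x))
      _ = 2 * (‖u x‖ₑ * ‖fderiv ℝ u x‖ₑ) := by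
          rw [ENNReal.ofReal_mul zero_le_two, ENNReal.ofReal_mul (norm_nonneg _), ofReal_norm,
            ofReal_norm, ENNReal.ofReal_ofNat]
  simp only [ENNReal.rpow_two, enorm_pow, enorm_norm, ← pow_mul] at gns
  calc ∫⁻ x, ‖u x‖ₑ ^ 4 ∂μ
      ≤ _ := gns
    _ ≤ lintegralPowLePowLIntegralFDerivConst μ 2 *
          (2 * ∫⁻ x, ‖u x‖ₑ * ‖fderiv ℝ u x‖ₑ ∂μ) ^ 2 := by
        gcongr
    _ = 4 * lintegralPowLePowLIntegralFDerivConst μ 2 *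
          (∫⁻ x, ‖u x‖ₑ * ‖fderiv ℝ u x‖ₑ ∂μ) ^ 2 := by ring
    _ ≤ 4 * lintegralPowLePowLIntegralFDerivConst μ 2 *
          ((∫⁻ x, ‖u x‖ₑ ^ 2 ∂μ) * ∫⁻ x, ‖fderiv ℝ u x‖ₑ ^ 2 ∂μ) := by
        gcongr
        exact ENNReal.lintegral_mul_sq_le hu.continuous.enorm.aemeasurable
          (hu.continuous_fderiv one_ne_zero).enorm.aemeasurable
    _ = _ := by ring

theorem integral_norm_pow_four_le_s10 (hE : finrank ℝ E = 2) {u : E → F} (hu : ContDiff ℝ 1 u)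
    (h2u : HasCompactSupport u) :
    ∫ x, ‖u x‖ ^ 4 ∂μ ≤ 4 * lintegralPowLePowLIntegralFDerivConst μ 2 *
      (∫ x, ‖u x‖ ^ 2 ∂μ) * ∫ x, ‖fderiv ℝ u x‖ ^ 2 ∂μ := by
  have hu' {n : ℕ} (hn : n ≠ 0) : Integrable (fun x => ‖u x‖ ^ n) μ :=
    hu.continuous.integrable_norm_pow_of_hasCompactSupport h2u hn
  have hDu' := (hu.continuous_fderiv one_ne_zero).integrable_norm_pow_of_hasCompactSupport
    (ν := μ) (h2u.fderiv ℝ) two_ne_zero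
  have := lintegral_enorm_pow_four_le_s10 μ hE hu h2u
  rw [← ofReal_integral_norm_pow_eq_lintegral_enorm_pow_s10 (hu' four_ne_zero),
    ← ofReal_integral_norm_pow_eq_lintegral_enorm_pow_s10 (hu' two_ne_zero),
    ← ofReal_integral_norm_pow_eq_lintegral_enorm_pow_s10 hDu',
    ← ENNReal.ofReal_coe_nnreal, ← ENNReal.ofReal_ofNat 4, ← ENNReal.ofReal_mul (by norm_num),
    ← ENNReal.ofReal_mul (by positivity), ← ENNReal.ofReal_mul (by positivity),
    ENNReal.ofReal_le_ofReal_iff (by positivity)] at this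
  exact this

theorem sq_integral_norm_sq_mul_norm_sq_le (hE : finrank ℝ E = 2) {v w : E → F}
    (hv : ContDiff ℝ 1 v) (h2v : HasCompactSupport v) (hw : ContDiff ℝ 1 w)
    (h2w : HasCompactSupport w) :
    (∫ x, ‖w x‖ ^ 2 * ‖v x‖ ^ 2 ∂μ) ^ 2 ≤ (4 * lintegralPowLePowLIntegralFDerivConst μ 2) ^ 2 *
      ((∫ x, ‖w x‖ ^ 2 ∂μ) * (∫ x, ‖fderiv ℝ w x‖ ^ 2 ∂μ) * ∫ x, ‖v x‖ ^ 2 ∂μ) *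
        ∫ x, ‖fderiv ℝ v x‖ ^ 2 ∂μ := by
  have hCS := sq_integral_mul_le_integral_sq_mul_integral_sq (ae_of_all _ fun x => by positivity)
    (ae_of_all _ fun x => by positivity)
    (hw.continuous.memLp_norm_sq_of_hasCompactSupport (ν := μ) h2w)
    (hv.continuous.memLp_norm_sq_of_hasCompactSupport (ν := μ) h2v)
  simp only [← pow_mul] at hCS
  refine hCS.trans ((mul_le_mul (integral_norm_pow_four_le_s10 μ hE hw h2w)
    (integral_norm_pow_four_le_s10 μ hE hv h2v) (by positivity) (by positivity)).trans_eq ?_)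
  ring

theorem exists_abs_integral_mul_inner_le (hE : finrank ℝ E = 2) {ε : ℝ} (hε : 0 < ε) :
    ∃ M : ℝ, 0 < M ∧ ∀ (c : E → ℝ) (v w : E → F), MemLp c 2 μ →
      ContDiff ℝ 1 v → HasCompactSupport v → ContDiff ℝ 1 w → HasCompactSupport w →
      |∫ x, c x * ⟪w x, v x⟫ ∂μ| ≤ M * ∫ x, c x ^ 2 ∂μ + ε * ∫ x, ‖fderiv ℝ v x‖ ^ 2 ∂μ +
        M * (∫ x, ‖w x‖ ^ 2 ∂μ) * (∫ x, ‖fderiv ℝ w x‖ ^ 2 ∂μ) * ∫ x, ‖v x‖ ^ 2 ∂μ := by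
  set K : ℝ := 4 * lintegralPowLePowLIntegralFDerivConst μ 2
  refine ⟨1 / 2 + K ^ 2 / (16 * ε), by positivity, fun c v w hc hv h2v hw h2w => ?_⟩
  have hwv : MemLp (fun x => ⟪w x, v x⟫) 2 μ :=
    (hw.continuous.inner hv.continuous).memLp_of_hasCompactSupport
      (h2v.mono (Function.support_subset_iff'.2 fun x hx => by
        simp [Function.notMem_support.1 hx]))
  have hsplit := abs_integral_mul_inner_le hc.integrable_sq (hc.integrable_mul hwv)
    ((hw.continuous.memLp_norm_sq_of_hasCompactSupport h2w).integrable_mul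
      (hv.continuous.memLp_norm_sq_of_hasCompactSupport h2v))
  have hyoung := le_mul_add_div_of_sq_le_mul (by positivity : 0 < 2 * ε) (by positivity)
    (by positivity) (sq_integral_norm_sq_mul_norm_sq_le μ hE hv h2v hw h2w)
  have hc2 : 0 ≤ K ^ 2 / (16 * ε) * ∫ x, c x ^ 2 ∂μ := by positivity
  have hX : 0 ≤ (∫ x, ‖w x‖ ^ 2 ∂μ) * (∫ x, ‖fderiv ℝ w x‖ ^ 2 ∂μ) * ∫ x, ‖v x‖ ^ 2 ∂μ := by
    positivity
  linear_combination hsplit + hyoung / 2 + hc2 + hX / 2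

end

theorem ContinuousLinearMap.norm_le_sum_norm_apply_single {ι F : Type*} [Fintype ι]
    [DecidableEq ι] [NormedAddCommGroup F] [NormedSpace ℝ F] (L : (ι → ℝ) →L[ℝ] F) :
    ‖L‖ ≤ ∑ j, ‖L (Pi.single j 1)‖ := by
  refine L.opNorm_le_bound (by positivity) fun x => ?_
  calc ‖L x‖ = ‖∑ j, x j • L (Pi.single j 1)‖ := by
        conv_lhs => rw [← Finset.univ_sum_single x, map_sum]
        simp_rw [← map_smul, ← Pi.single_smul, smul_eq_mul, mul_one]
    _ ≤ ∑ j, ‖x‖ * ‖L (Pi.single j 1)‖ := by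
        refine norm_sum_le_of_le _ fun j _ => ?_
        rw [norm_smul]
        gcongr
        exact norm_le_pi_norm x j
    _ = (∑ j, ‖L (Pi.single j 1)‖) * ‖x‖ := by rw [← Finset.mul_sum, mul_comm]

theorem ContinuousLinearMap.norm_sq_le_card_mul_sum_sq {ι F : Type*} [Fintype ι]
    [DecidableEq ι] [NormedAddCommGroup F] [NormedSpace ℝ F] (L : (ι → ℝ) →L[ℝ] F) :
    ‖L‖ ^ 2 ≤ Fintype.card ι * ∑ j, ‖L (Pi.single j 1)‖ ^ 2 :=
  (pow_le_pow_left₀ (norm_nonneg L) L.norm_le_sum_norm_apply_single 2).trans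
    (sq_sum_le_card_mul_sum_sq ..)

theorem continuous_pderiv2 {f : (Fin 2 → ℝ) → ℝ} (hf : ContDiff ℝ 1 f) (i : Fin 2) :
    Continuous (pderiv2 f i) :=
  (hf.continuous_fderiv one_ne_zero).clm_apply continuous_const

theorem HasCompactSupport.pderiv2 {f : (Fin 2 → ℝ) → ℝ} (hf : HasCompactSupport f) (i : Fin 2) :
    HasCompactSupport (pderiv2 f i) :=
  hf.fderiv_apply ℝ (Pi.single i 1)

theorem pderiv2_apply_eq {ι : Type*} {u : (Fin 2 → ℝ) → ι → ℝ} {x : Fin 2 → ℝ}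
    (hu : DifferentiableAt ℝ u x) (i : ι) (j : Fin 2) :
    pderiv2 (fun y => u y i) j x = fderiv ℝ u x (Pi.single j 1) i := by
  rw [pderiv2, fderiv_apply hu]
  rfl

section

variable {ι : Type*} [Fintype ι] {u : (Fin 2 → ℝ) → ι → ℝ}

theorem EuclideanSpace.norm_sq_equiv_symm (y : ι → ℝ) :
    ‖(EuclideanSpace.equiv ι ℝ).symm y‖ ^ 2 = ∑ i, y i ^ 2 := by
  simp [EuclideanSpace.real_norm_sq_eq]

theorem EuclideanSpace.inner_equiv_symm (y z : ι → ℝ) :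
    ⟪(EuclideanSpace.equiv ι ℝ).symm y, (EuclideanSpace.equiv ι ℝ).symm z⟫ = ∑ i, y i * z i := by
  simp [PiLp.inner_apply, mul_comm]

theorem norm_fderiv_equiv_symm_comp_sq_le {x : Fin 2 → ℝ} (hu : DifferentiableAt ℝ u x) :
    ‖fderiv ℝ ((EuclideanSpace.equiv ι ℝ).symm ∘ u) x‖ ^ 2 ≤
      2 * ∑ i, ∑ j, pderiv2 (fun y => u y i) j x ^ 2 := by
  rw [ContinuousLinearEquiv.comp_fderiv]
  refine ((ContinuousLinearMap.norm_sq_le_card_mul_sum_sq _).trans_eq ?_)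
  simp only [Fintype.card_fin, ContinuousLinearMap.comp_apply, ContinuousLinearEquiv.coe_coe,
    EuclideanSpace.norm_sq_equiv_symm, pderiv2_apply_eq hu, Nat.cast_ofNat]
  rw [Finset.sum_comm]

theorem integral_norm_fderiv_equiv_symm_comp_sq_le (hu : ContDiff ℝ 1 u)
    (h2u : HasCompactSupport u) :
    ∫ x, ‖fderiv ℝ ((EuclideanSpace.equiv ι ℝ).symm ∘ u) x‖ ^ 2 ≤
      2 * ∫ x, ∑ i, ∑ j, pderiv2 (fun y => u y i) j x ^ 2 := by
  have hu' : ContDiff ℝ 1 ((EuclideanSpace.equiv ι ℝ).symm ∘ u) :=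
    (EuclideanSpace.equiv ι ℝ).symm.contDiff.comp hu
  have h2u' : HasCompactSupport ((EuclideanSpace.equiv ι ℝ).symm ∘ u) :=
    h2u.comp_left (g := (EuclideanSpace.equiv ι ℝ).symm) (map_zero _)
  have hsum : Integrable (fun x => ∑ i, ∑ j, pderiv2 (fun y => u y i) j x ^ 2) := by
    refine integrable_finsetSum _ fun i _ => integrable_finsetSum _ fun j _ => ?_
    have hui : HasCompactSupport fun y => u y i := h2u.comp_left (g := fun y : ι → ℝ => y i) rfl
    exact ((continuous_pderiv2 (contDiff_pi.1 hu i) j).memLp_of_hasCompactSupport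
        (hui.pderiv2 j)).integrable_sq
  rw [← integral_const_mul]
  exact integral_mono
    ((hu'.continuous_fderiv one_ne_zero).integrable_norm_pow_of_hasCompactSupport
      (h2u'.fderiv ℝ) two_ne_zero)
    (hsum.const_mul 2) fun x => norm_fderiv_equiv_symm_comp_sq_le (hu.differentiable one_ne_zero x)

end

/-- Estimate (28) of the paper:
`|∫ C (u₂ · u)| ≤ M ‖C‖² + ε ‖∇u‖² + M ‖u₂‖² ‖∇u₂‖² ‖u‖²`. -/
theorem estimate_C_u2_dot_u :
    ∀ ε : ℝ, 0 < ε → ∃ M : ℝ, 0 < M ∧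
      ∀ (u u₂ : (Fin 2 → ℝ) → (Fin 2 → ℝ)) (C : (Fin 2 → ℝ) → ℝ),
        ContDiff ℝ 1 u → HasCompactSupport u →
        ContDiff ℝ 1 u₂ → HasCompactSupport u₂ →
        Continuous C → HasCompactSupport C →
        |∫ x, C x * (∑ i, u₂ x i * u x i)| ≤
          M * (∫ x, (C x) ^ 2) +
            ε * (∫ x, ∑ i, ∑ j, (pderiv2 (fun y => u y i) j x) ^ 2) +
            M * (∫ x, ∑ i, (u₂ x i) ^ 2) *
              (∫ x, ∑ i, ∑ j, (pderiv2 (fun y => u₂ y i) j x) ^ 2) *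
              (∫ x, ∑ i, (u x i) ^ 2) := by
  intro ε hε
  obtain ⟨M, hM, hest⟩ := exists_abs_integral_mul_inner_le (F := EuclideanSpace ℝ (Fin 2))
    (volume : Measure (Fin 2 → ℝ)) (by simp) (half_pos hε)
  refine ⟨2 * M, by positivity, fun u u₂ C hu h2u hu₂ h2u₂ hC h2C => ?_⟩
  let e := (EuclideanSpace.equiv (Fin 2) ℝ).symm
  have h := hest C (e ∘ u) (e ∘ u₂) (hC.memLp_of_hasCompactSupport h2C)
    (e.contDiff.comp hu) (h2u.comp_left (map_zero e)) (e.contDiff.comp hu₂)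
    (h2u₂.comp_left (map_zero e))
  simp only [Function.comp_apply, e, EuclideanSpace.inner_equiv_symm, EuclideanSpace.norm_sq_equiv_symm] at h
  have hD := integral_norm_fderiv_equiv_symm_comp_sq_le hu h2u
  have hD₂ := integral_norm_fderiv_equiv_symm_comp_sq_le hu₂ h2u₂
  have hC2 : 0 ≤ M * ∫ x, C x ^ 2 := by positivity
  linear_combination h + ε / 2 * hD +
    (M * (∫ x, ∑ i, u₂ x i ^ 2) * ∫ x, ∑ i, u x i ^ 2) * hD₂ + hC2
end
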